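/- Let Ω ⊆ ℂ be open, let Q : Ω → ℝ be real-valued, let λ ∈ ℂ, and let u : Ω → ℂ be of class C² satisfying u_{zz̄}(z) + λ·(∂u/∂z̄)(z) = Q(z)·u(z) on Ω. Then the function v(z) := e_{−λ}(z)·conj(u(z)) is of class C² and satisfies the same equation: v_{zz̄}(z) + λ·(∂v/∂z̄)(z) = Q(z)·v(z) on Ω. -/

import Mathlib

open Complex MeasureTheory Filter Topology

/-- Wirtinger derivative `∂f/∂z`. -/
noncomputable def wdz (f : ℂ → ℂ) (z : ℂ) : ℂ :=
  (1 / 2) * ((fderiv ℝ f z) 1 - Complex.I • (fderiv ℝ f z) Complex.I)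

/-- Wirtinger derivative `∂f/∂z̄`. -/
noncomputable def wdzbar (f : ℂ → ℂ) (z : ℂ) : ℂ :=
  (1 / 2) * ((fderiv ℝ f z) 1 + Complex.I • (fderiv ℝ f z) Complex.I)

/-- `√σ` as a complex-valued function. -/
noncomputable def sqrtC (σ : ℂ → ℝ) (z : ℂ) : ℂ := (Real.sqrt (σ z) : ℂ)

/-- The conductivity-type potential `Q = (√σ)_{z z̄} / √σ`. -/
noncomputable def Qpot (σ : ℂ → ℝ) (z : ℂ) : ℂ :=
  wdz (fun w => wdzbar (sqrtC σ) w) z / sqrtC σ z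

/-- `g` has an `L^p` tail: `∫_{|z| ≥ 1} |g|^p dA < ∞`. -/
def HasLpTail (p : ℝ) (g : ℂ → ℂ) : Prop :=
  MeasureTheory.IntegrableOn (fun z => ‖g z‖ ^ p)
    {z : ℂ | 1 ≤ ‖z‖} MeasureTheory.volume

/-- `e_λ(z) = exp(λz - conj λ · conj z)`, a function of modulus 1. -/
noncomputable def expPos (lam z : ℂ) : ℂ :=
  Complex.exp (lam * z - (starRingEnd ℂ) lam * (starRingEnd ℂ) z)

/-- `e_{-λ}(z) = exp(conj λ · conj z - λz)`, a function of modulus 1. -/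
noncomputable def expNeg (lam z : ℂ) : ℂ :=
  Complex.exp ((starRingEnd ℂ) lam * (starRingEnd ℂ) z - lam * z)

/-! With `e = e_{-λ}` one has `∂e = -λ e` and `∂̄e = λ̄ e`, so the product rule gives
`∂̄(e ū) = e · conj(λ u + ∂u)` and `∂(e · conj h) = e · conj(∂̄h - λ̄ h)`. Together with
`∂̄∂u = ∂∂̄u` for `C²` functions this yields `(∂∂̄ + λ∂̄)(e ū) = e · conj((∂∂̄ + λ∂̄) u)`;
conjugating the equation for `u` and using that `Q` is real gives the equation for `e ū`. -/
open ComplexConjugate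

theorem ContDiffAt.differentiableAt_fderiv {𝕜 E F : Type*} [NontriviallyNormedField 𝕜]
    [NormedAddCommGroup E] [NormedSpace 𝕜 E] [NormedAddCommGroup F] [NormedSpace 𝕜 F]
    {f : E → F} {x : E} (hf : ContDiffAt 𝕜 2 f x) : DifferentiableAt 𝕜 (fderiv 𝕜 f) x :=
  (hf.fderiv_right (m := 1) (by norm_num)).differentiableAt one_ne_zero

section Wirtinger

variable {f g : ℂ → ℂ} {z : ℂ}

theorem Filter.EventuallyEq.wdz_eq (h : f =ᶠ[𝓝 z] g) : wdz f z = wdz g z := by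
  rw [wdz, wdz, h.fderiv_eq]

theorem wdz_conj : wdz (fun w => conj (f w)) z = conj (wdzbar f z) := by
  change wdz (fun w => star (f w)) z = _
  rw [wdz, wdzbar, fderiv_star]
  simp only [ContinuousLinearMap.comp_apply, ContinuousLinearEquiv.coe_coe, starL'_apply,
    RCLike.star_def, smul_eq_mul, map_mul, map_div₀, map_one, map_ofNat, map_add, conj_I]
  ring

theorem wdzbar_conj : wdzbar (fun w => conj (f w)) z = conj (wdz f z) := by
  change wdzbar (fun w => star (f w)) z = _
  rw [wdz, wdzbar, fderiv_star]
  simp only [ContinuousLinearMap.comp_apply, ContinuousLinearEquiv.coe_coe, starL'_apply,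
    RCLike.star_def, smul_eq_mul, map_mul, map_div₀, map_one, map_ofNat, map_sub, conj_I]
  ring

theorem wdz_mul (hf : DifferentiableAt ℝ f z) (hg : DifferentiableAt ℝ g z) :
    wdz (fun w => f w * g w) z = wdz f z * g z + f z * wdz g z := by
  simp only [wdz, fderiv_fun_mul hf hg, add_apply, smul_apply, smul_eq_mul]
  ring

theorem wdzbar_mul (hf : DifferentiableAt ℝ f z) (hg : DifferentiableAt ℝ g z) :
    wdzbar (fun w => f w * g w) z = wdzbar f z * g z + f z * wdzbar g z := by
  simp only [wdzbar, fderiv_fun_mul hf hg, add_apply, smul_apply, smul_eq_mul]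
  ring

theorem wdzbar_add (hf : DifferentiableAt ℝ f z) (hg : DifferentiableAt ℝ g z) :
    wdzbar (fun w => f w + g w) z = wdzbar f z + wdzbar g z := by
  simp only [wdzbar, fderiv_fun_add hf hg, add_apply, smul_eq_mul]
  ring

theorem wdzbar_const_mul (c : ℂ) (hf : DifferentiableAt ℝ f z) :
    wdzbar (fun w => c * f w) z = c * wdzbar f z := by
  simp only [wdzbar, fderiv_const_mul hf c, smul_apply, smul_eq_mul]
  ring

theorem differentiableAt_wdz (hf : DifferentiableAt ℝ (fderiv ℝ f) z) :
    DifferentiableAt ℝ (wdz f) z := by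
  unfold wdz
  fun_prop

theorem fderiv_wdz_apply (hf : DifferentiableAt ℝ (fderiv ℝ f) z) (v : ℂ) :
    fderiv ℝ (wdz f) z v =
      (1 / 2) * (fderiv ℝ (fderiv ℝ f) z v 1 - I * fderiv ℝ (fderiv ℝ f) z v I) := by
  unfold wdz
  simp only [smul_eq_mul]
  rw [fderiv_const_mul (by fun_prop), fderiv_fun_sub (by fun_prop) (by fun_prop),
    fderiv_const_mul (by fun_prop), fderiv_clm_apply hf (by fun_prop),
    fderiv_clm_apply hf (by fun_prop)]
  simp

theorem fderiv_wdzbar_apply (hf : DifferentiableAt ℝ (fderiv ℝ f) z) (v : ℂ) :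
    fderiv ℝ (wdzbar f) z v =
      (1 / 2) * (fderiv ℝ (fderiv ℝ f) z v 1 + I * fderiv ℝ (fderiv ℝ f) z v I) := by
  unfold wdzbar
  simp only [smul_eq_mul]
  rw [fderiv_const_mul (by fun_prop), fderiv_fun_add (by fun_prop) (by fun_prop),
    fderiv_const_mul (by fun_prop), fderiv_clm_apply hf (by fun_prop),
    fderiv_clm_apply hf (by fun_prop)]
  simp only [fderiv_fun_const, Pi.zero_apply, ContinuousLinearMap.comp_zero, zero_add, smul_add,
    add_apply, smul_apply, ContinuousLinearMap.flip_apply, smul_eq_mul]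
  ring

theorem wdz_wdzbar_comm (hf : ContDiffAt ℝ 2 f z) :
    wdz (wdzbar f) z = wdzbar (wdz f) z := by
  have hsymm := hf.isSymmSndFDerivAt (by simp) 1 I
  simp only [wdz, wdzbar, smul_eq_mul, fderiv_wdz_apply hf.differentiableAt_fderiv,
    fderiv_wdzbar_apply hf.differentiableAt_fderiv, hsymm]
  ring

end Wirtinger

section Twist

variable (lam : ℂ) {f : ℂ → ℂ} {z : ℂ}

theorem hasFDerivAt_expNeg (z : ℂ) :
    HasFDerivAt (expNeg lam)
      (expNeg lam z • (conj lam • (conjCLE : ℂ →L[ℝ] ℂ) - lam • ContinuousLinearMap.id ℝ ℂ)) z :=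
  ((conjCLE.hasFDerivAt.const_mul (conj lam)).sub ((hasFDerivAt_id z).const_mul lam)).cexp

theorem wdz_expNeg (z : ℂ) : wdz (expNeg lam) z = -lam * expNeg lam z := by
  simp only [wdz, (hasFDerivAt_expNeg lam z).fderiv, smul_apply,
    sub_apply, ContinuousLinearMap.id_apply, ContinuousLinearEquiv.coe_coe,
    ContinuousAlgEquiv.coeCLE_apply, conjCAE_apply, map_one, conj_I, smul_eq_mul]
  linear_combination (expNeg lam z * (conj lam + lam)) / 2 * I_sq

theorem wdzbar_expNeg (z : ℂ) : wdzbar (expNeg lam) z = conj lam * expNeg lam z := by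
  simp only [wdzbar, (hasFDerivAt_expNeg lam z).fderiv, smul_apply,
    sub_apply, ContinuousLinearMap.id_apply, ContinuousLinearEquiv.coe_coe,
    ContinuousAlgEquiv.coeCLE_apply, conjCAE_apply, map_one, conj_I, smul_eq_mul]
  linear_combination -(expNeg lam z * (conj lam + lam)) / 2 * I_sq

theorem contDiff_expNeg {n : WithTop ℕ∞} : ContDiff ℝ n (expNeg lam) :=
  ((contDiff_const.mul conjCLE.contDiff).sub (contDiff_const.mul contDiff_id)).cexp

theorem differentiableAt_expNeg (z : ℂ) : DifferentiableAt ℝ (expNeg lam) z :=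
  (hasFDerivAt_expNeg lam z).differentiableAt

theorem wdzbar_expNeg_mul_conj (hf : DifferentiableAt ℝ f z) :
    wdzbar (fun w => expNeg lam w * conj (f w)) z = expNeg lam z * conj (lam * f z + wdz f z) := by
  have hconj : DifferentiableAt ℝ (fun w => conj (f w)) z := hf.star
  rw [wdzbar_mul (differentiableAt_expNeg lam z) hconj, wdzbar_conj,
    wdzbar_expNeg, map_add, map_mul]
  ring

theorem wdz_expNeg_mul_conj (hf : DifferentiableAt ℝ f z) :
    wdz (fun w => expNeg lam w * conj (f w)) z =
      expNeg lam z * conj (wdzbar f z - conj lam * f z) := by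
  have hconj : DifferentiableAt ℝ (fun w => conj (f w)) z := hf.star
  rw [wdz_mul (differentiableAt_expNeg lam z) hconj, wdz_conj,
    wdz_expNeg, map_sub, map_mul, conj_conj]
  ring

noncomputable def faddeevOp (f : ℂ → ℂ) (z : ℂ) : ℂ :=
  wdz (wdzbar f) z + lam * wdzbar f z

theorem faddeevOp_expNeg_mul_conj (hf : ContDiffAt ℝ 2 f z) :
    faddeevOp lam (fun w => expNeg lam w * conj (f w)) z =
      expNeg lam z * conj (faddeevOp lam f z) := by
  set g := fun w => lam * f w + wdz f w
  have hf₁ : DifferentiableAt ℝ f z := hf.differentiableAt two_ne_zero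
  have hwdzbar : wdzbar (fun w => expNeg lam w * conj (f w)) =ᶠ[𝓝 z]
      fun w => expNeg lam w * conj (g w) := by
    filter_upwards [hf.eventually (by simp)] with w hw
    exact wdzbar_expNeg_mul_conj lam (hw.differentiableAt two_ne_zero)
  have hwdz : DifferentiableAt ℝ (wdz f) z := differentiableAt_wdz hf.differentiableAt_fderiv
  have hwdzbar_g : wdzbar g z = lam * wdzbar f z + wdz (wdzbar f) z := by
    rw [wdzbar_add (hf₁.const_mul lam) hwdz, wdzbar_const_mul lam hf₁, wdz_wdzbar_comm hf]
  have hg : DifferentiableAt ℝ g z := (hf₁.const_mul lam).add hwdz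
  rw [faddeevOp, faddeevOp, hwdzbar.wdz_eq, hwdzbar.eq_of_nhds, wdz_expNeg_mul_conj lam hg,
    hwdzbar_g]
  simp only [map_add, map_mul, map_sub, conj_conj]
  ring

end Twist

/-- Conjugation-twist symmetry (used in Proposition 4.1): for a real potential
`Q`, if `u` solves the Faddeev-type equation then so does `v = e_{-λ} · conj u`. -/
theorem faddeev_conjugation_symmetry_planar
    (Ω : Set ℂ) (hΩ : IsOpen Ω) (Q : ℂ → ℝ) (lam : ℂ)
    (u : ℂ → ℂ) (hu : ContDiffOn ℝ 2 u Ω)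
    (heq : ∀ z ∈ Ω,
      wdz (fun w => wdzbar u w) z + lam * wdzbar u z = (Q z : ℂ) * u z) :
    ContDiffOn ℝ 2 (fun w => expNeg lam w * (starRingEnd ℂ) (u w)) Ω ∧
    ∀ z ∈ Ω,
      wdz (fun w => wdzbar (fun x => expNeg lam x * (starRingEnd ℂ) (u x)) w) z +
        lam * wdzbar (fun x => expNeg lam x * (starRingEnd ℂ) (u x)) z =
        (Q z : ℂ) * (expNeg lam z * (starRingEnd ℂ) (u z)) := by
  refine ⟨(contDiff_expNeg lam).contDiffOn.mul (conjCLE.contDiff.comp_contDiffOn hu),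
    fun z hz => ?_⟩
  change faddeevOp lam _ z = _
  rw [faddeevOp_expNeg_mul_conj lam (hu.contDiffAt (hΩ.mem_nhds hz)), faddeevOp, heq z hz,
    map_mul, conj_ofReal]
  ring
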